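/- Extend Θ to n∈ℤ^E by inserting the extra indicator 1{n_e≥0 for all e∈E} in its definition. For functions f: V×(0,∞)^V×ℤ^E→ℝ that are differentiable in each coordinate Φ_x, define the operators (L̃f)(x,Φ,n) = −(1/Φ_x)(∂f/∂Φ_x)(x,Φ,n) + Σ_{y: y∼x}[W_{xy}(f(y,Φ,n−δ_{xy})−f(x,Φ,n)) + W_{xy}(Φ_y/Φ_x)(f(x,Φ,n−δ_{xy})−f(x,Φ,n))], and (Ľf)(x,Φ,n) = −(1/Φ_x)(∂f/∂Φ_x)(x,Φ,n) + Σ_{y: y∼x}(n_{xy}/Φ_x²)[(1/2)·1_{A₁(x,y,n)}(f(y,Φ,n−δ_{xy})+f(x,Φ,n−δ_{xy})−2f(x,Φ,n)) + 1_{A₂(x,y,n)}(f(y,Φ,n−δ_{xy})−f(x,Φ,n)) + 1_{A₃(x,y,n)}(f(x,Φ,n−δ_{xy})−f(x,Φ,n))], where A₁(x,y,n) = {the number of connected components of C(n−δ_{xy}) equals that of C(n)}, A₂(x,y,n) = {a new component is created in C(n−δ_{xy}) compared with C(n) and y lies in the component of x₀ in C(n−δ_{xy})}, A₃(x,y,n)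 = {a new component is created in C(n−δ_{xy}) compared with C(n) and x lies in the component of x₀ in C(n−δ_{xy})}. Then for every such f, every x∈V, every Φ∈(0,∞)^V and every n∈ℕ^E such that x lies in the connected component of x₀ in C(n), one has L̃(Θf)(x,Φ,n) = Θ(x,Φ,n)·(Ľf)(x,Φ,n). -/

import Mathlib

open scoped Classical
noncomputable section

/-- The simple graph on `V` whose edges are the edges `e` of the multigraph
(with endpoint map `ends`) satisfying `p e`. -/
def og {V E : Type} (ends : E → V × V) (p : E → Prop) : SimpleGraph V :=
  SimpleGraph.fromRel (fun v w => ∃ e, p e ∧ (ends e).1 = v ∧ (ends e).2 = w)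

/-- Number of connected components (isolated vertices counted) of the subgraph
with edge set `{e | p e}`. -/
def numC {V E : Type} (ends : E → V × V) (p : E → Prop) : ℕ :=
  Nat.card (og ends p).ConnectedComponent

variable {V E : Type} [Fintype V] [Fintype E]

/-- Interaction constant `J_e(Φ) = W_e Φ_{e₊} Φ_{e₋}`. -/
def Jw (ends : E → V × V) (W : E → ℝ) (Φ : V → ℝ) (e : E) : ℝ :=
  W e * Φ (ends e).1 * Φ (ends e).2

/-- The set of edges incident to the vertex `x`. -/
def inc (ends : E → V × V) (x : V) : Finset E :=
  Finset.univ.filter (fun e => (ends e).1 = x ∨ (ends e).2 = x)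

/-- The endpoint of the edge `e` other than `x`. -/
def oth (ends : E → V × V) (e : E) (x : V) : V :=
  if (ends e).1 = x then (ends e).2 else (ends e).1

/-- Total conductance at `x`: `W_x = ∑_{y ~ x} W_{xy}` (sum over edges incident to `x`). -/
def Wtot (ends : E → V × V) (W : E → ℝ) (x : V) : ℝ :=
  ∑ e ∈ inc ends x, W e

/-- The function `Θ(x, Φ, n)` of the paper. -/
def Theta (ends : E → V × V) (W : E → ℝ) (x₀ x : V) (Φ : V → ℝ) (n : E → ℕ) : ℝ :=
  Real.exp (-(1 / 2) * ∑ z, Wtot ends W z * Φ z ^ 2 - ∑ e, Jw ends W Φ e) *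
  (∏ e, (2 * Jw ends W Φ e) ^ n e / ((n e).factorial : ℝ)) *
  2 ^ (numC ends (fun e => 0 < n e) - 1) *
  (∏ z ∈ Finset.univ.erase x, Φ z)⁻¹ *
  (if (og ends (fun e => 0 < n e)).Reachable x x₀ then 1 else 0)

/-- Decrease an integer-valued current by `1` at the edge `e`. -/
def decE (n : E → ℤ) (e : E) : E → ℤ := Function.update n e (n e - 1)

/-- The function `Θ(x, Φ, n)` extended to `n ∈ ℤ^E`, with the extra indicator
`1{n_e ≥ 0 for all e}`. -/
def ThetaZ (ends : E → V × V) (W : E → ℝ) (x₀ x : V) (Φ : V → ℝ) (n : E → ℤ) : ℝ :=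
  Real.exp (-(1 / 2) * ∑ z, Wtot ends W z * Φ z ^ 2 - ∑ e, Jw ends W Φ e) *
  (∏ e ∈ Finset.univ.filter (fun e => 0 < n e),
      (2 * Jw ends W Φ e) ^ (n e).toNat / (((n e).toNat.factorial : ℝ))) *
  2 ^ (numC ends (fun e => 0 < n e) - 1) *
  (∏ z ∈ Finset.univ.erase x, Φ z)⁻¹ *
  (if (og ends (fun e => 0 < n e)).Reachable x x₀ then 1 else 0) *
  (if ∀ e, 0 ≤ n e then 1 else 0)

/-- The event `A₁(x,y,n)`: closing one unit of the edge `e` does not change the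
number of clusters. -/
def A1 (ends : E → V × V) (n : E → ℤ) (e : E) : Prop :=
  numC ends (fun e' => 0 < decE n e e') = numC ends (fun e' => 0 < n e')

/-- The event `A₂(x,y,n)`: a new cluster is created and `y` (the endpoint of `e`
other than `x`) is on the side of `x₀`. -/
def A2 (ends : E → V × V) (x₀ x : V) (n : E → ℤ) (e : E) : Prop :=
  numC ends (fun e' => 0 < decE n e e') = numC ends (fun e' => 0 < n e') + 1 ∧
  (og ends (fun e' => 0 < decE n e e')).Reachable (oth ends e x) x₀

/-- The event `A₃(x,y,n)`: a new cluster is created and `x` is on the side of `x₀`. -/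
def A3 (ends : E → V × V) (x₀ x : V) (n : E → ℤ) (e : E) : Prop :=
  numC ends (fun e' => 0 < decE n e e') = numC ends (fun e' => 0 < n e') + 1 ∧
  (og ends (fun e' => 0 < decE n e e')).Reachable x x₀

/-- The generator `L̃` of the time-reversed process. -/
def Lt (ends : E → V × V) (W : E → ℝ) (f : V → (V → ℝ) → (E → ℤ) → ℝ)
    (x : V) (Φ : V → ℝ) (n : E → ℤ) : ℝ :=
  -(1 / Φ x) * deriv (fun t => f x (Function.update Φ x t) n) (Φ x) +
  ∑ e ∈ inc ends x,
    (W e * (f (oth ends e x) Φ (decE n e) - f x Φ n) +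
     W e * (Φ (oth ends e x) / Φ x) * (f x Φ (decE n e) - f x Φ n))

/-- The generator `Ľ` of the self-interacting process. -/
def Lc (ends : E → V × V) (W : E → ℝ) (x₀ : V) (f : V → (V → ℝ) → (E → ℤ) → ℝ)
    (x : V) (Φ : V → ℝ) (n : E → ℤ) : ℝ :=
  -(1 / Φ x) * deriv (fun t => f x (Function.update Φ x t) n) (Φ x) +
  ∑ e ∈ inc ends x, ((n e : ℝ) / Φ x ^ 2) *
    ((1 / 2) * (if A1 ends n e then (1 : ℝ) else 0) *
        (f (oth ends e x) Φ (decE n e) + f x Φ (decE n e) - 2 * f x Φ n) +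
     (if A2 ends x₀ x n e then (1 : ℝ) else 0) *
        (f (oth ends e x) Φ (decE n e) - f x Φ n) +
     (if A3 ends x₀ x n e then (1 : ℝ) else 0) *
        (f x Φ (decE n e) - f x Φ n))

section GraphLemmas
variable {V : Type}

lemma reach_cases {G G' : SimpleGraph V} (a b : V)
    (hadj : ∀ u v, G.Adj u v → G'.Adj u v ∨ (u = a ∧ v = b) ∨ (u = b ∧ v = a))
    {u v : V} (h : G.Reachable u v) :
    G'.Reachable u v ∨ (G'.Reachable u a ∧ G'.Reachable b v) ∨
      (G'.Reachable u b ∧ G'.Reachable a v) := by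
  obtain ⟨w⟩ := h
  induction w with
  | nil => exact Or.inl (SimpleGraph.Reachable.refl _)
  | cons h p ih =>
    rcases hadj _ _ h with h' | ⟨rfl, rfl⟩ | ⟨rfl, rfl⟩
    · rcases ih with h2 | ⟨h2, h3⟩ | ⟨h2, h3⟩
      · exact Or.inl (h'.reachable.trans h2)
      · exact Or.inr (Or.inl ⟨h'.reachable.trans h2, h3⟩)
      · exact Or.inr (Or.inr ⟨h'.reachable.trans h2, h3⟩)
    · rcases ih with h2 | ⟨h2, h3⟩ | ⟨h2, h3⟩
      · exact Or.inr (Or.inl ⟨SimpleGraph.Reachable.refl _, h2⟩)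
      · exact Or.inr (Or.inl ⟨SimpleGraph.Reachable.refl _, h3⟩)
      · exact Or.inl h3
    · rcases ih with h2 | ⟨h2, h3⟩ | ⟨h2, h3⟩
      · exact Or.inr (Or.inr ⟨SimpleGraph.Reachable.refl _, h2⟩)
      · exact Or.inl h3
      · exact Or.inr (Or.inr ⟨SimpleGraph.Reachable.refl _, h3⟩)

lemma reach_iff_of_reach {G G' : SimpleGraph V} (hle : G' ≤ G) (a b : V)
    (hadj : ∀ u v, G.Adj u v → G'.Adj u v ∨ (u = a ∧ v = b) ∨ (u = b ∧ v = a))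
    (hab : G'.Reachable a b) (u v : V) :
    G.Reachable u v ↔ G'.Reachable u v := by
  constructor
  · intro h
    rcases reach_cases a b hadj h with h' | ⟨h1, h2⟩ | ⟨h1, h2⟩
    · exact h'
    · exact (h1.trans hab).trans h2
    · exact (h1.trans hab.symm).trans h2
  · exact fun h => h.mono hle

lemma card_cc_eq_of_reach_iff {G G' : SimpleGraph V}
    (h : ∀ u v, G.Reachable u v ↔ G'.Reachable u v) :
    Nat.card G.ConnectedComponent = Nat.card G'.ConnectedComponent := by
  refine Nat.card_eq_of_bijective
    (Quot.lift (fun v => G'.connectedComponentMk v)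
      (fun u v huv => SimpleGraph.ConnectedComponent.sound ((h u v).mp huv))) ⟨?_, ?_⟩
  · rintro ⟨u⟩ ⟨v⟩ huv
    exact SimpleGraph.ConnectedComponent.sound
      ((h u v).mpr (SimpleGraph.ConnectedComponent.exact huv))
  · rintro ⟨v⟩
    exact ⟨G.connectedComponentMk v, rfl⟩


lemma card_cc_succ [Finite V] {G G' : SimpleGraph V} (hle : G' ≤ G) (a b : V)
    (hadj : ∀ u v, G.Adj u v → G'.Adj u v ∨ (u = a ∧ v = b) ∨ (u = b ∧ v = a))
    (hab : G.Reachable a b) (hnab : ¬ G'.Reachable a b) :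
    Nat.card G'.ConnectedComponent = Nat.card G.ConnectedComponent + 1 := by
  classical
  have hg : ∀ u v : V, G.Reachable u v →
      (if G'.Reachable u b then G'.connectedComponentMk a else G'.connectedComponentMk u) =
      (if G'.Reachable v b then G'.connectedComponentMk a else G'.connectedComponentMk v) := by
    intro u v huv
    rcases @reach_cases V G G' a b hadj u v huv with h' | ⟨h1, h2⟩ | ⟨h1, h2⟩
    · by_cases hub : G'.Reachable u b
      · rw [if_pos hub, if_pos (h'.symm.trans hub)]
      · rw [if_neg hub, if_neg (fun hvb => hub (h'.trans hvb)),
          SimpleGraph.ConnectedComponent.sound h']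
    · rw [if_neg (fun hub => hnab (h1.symm.trans hub)), if_pos h2.symm,
        SimpleGraph.ConnectedComponent.sound h1]
    · rw [if_pos h1, if_neg (fun hvb => hnab (h2.trans hvb))]
      exact SimpleGraph.ConnectedComponent.sound h2
  let g : G.ConnectedComponent → G'.ConnectedComponent :=
    SimpleGraph.ConnectedComponent.lift (fun u =>
      if G'.Reachable u b then G'.connectedComponentMk a else G'.connectedComponentMk u)
      (fun u v p _ => hg u v p.reachable)
  let F : G.ConnectedComponent ⊕ Unit → G'.ConnectedComponent :=
    Sum.elim g (fun _ => G'.connectedComponentMk b)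
  have hF_inl : ∀ u : V, F (Sum.inl (Quot.mk G.Reachable u)) =
      (if G'.Reachable u b then G'.connectedComponentMk a else G'.connectedComponentMk u) :=
    fun u => rfl
  have hbij : Function.Bijective F := by
    constructor
    · rintro (c | ⟨⟩) (c' | ⟨⟩) hF
      · obtain ⟨u, rfl⟩ := c.exists_rep
        obtain ⟨v, rfl⟩ := c'.exists_rep
        rw [hF_inl, hF_inl] at hF
        refine congrArg Sum.inl (SimpleGraph.ConnectedComponent.sound ?_)
        by_cases hub : G'.Reachable u b <;> by_cases hvb : G'.Reachable v b
        · exact ((hub.mono hle).trans ((hvb.mono hle)).symm)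
        · rw [if_pos hub, if_neg hvb] at hF
          have hav := SimpleGraph.ConnectedComponent.exact hF
          exact ((hub.mono hle).trans hab.symm).trans (hav.mono hle)
        · rw [if_neg hub, if_pos hvb] at hF
          have hav := SimpleGraph.ConnectedComponent.exact hF
          exact ((hav.mono hle).trans hab).trans (hvb.mono hle).symm
        · rw [if_neg hub, if_neg hvb] at hF
          exact (SimpleGraph.ConnectedComponent.exact hF).mono hle
      · obtain ⟨u, rfl⟩ := c.exists_rep
        rw [hF_inl] at hF
        exfalso
        by_cases hub : G'.Reachable u b
        · rw [if_pos hub] at hF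
          exact hnab (SimpleGraph.ConnectedComponent.exact hF)
        · rw [if_neg hub] at hF
          exact hub (SimpleGraph.ConnectedComponent.exact hF)
      · obtain ⟨v, rfl⟩ := c'.exists_rep
        rw [hF_inl] at hF
        exfalso
        by_cases hvb : G'.Reachable v b
        · rw [if_pos hvb] at hF
          exact hnab (SimpleGraph.ConnectedComponent.exact hF).symm
        · rw [if_neg hvb] at hF
          exact hvb (SimpleGraph.ConnectedComponent.exact hF).symm
      · rfl
    · intro c
      obtain ⟨v, rfl⟩ := c.exists_rep
      by_cases hvb : G'.Reachable v b
      · exact ⟨Sum.inr (), (SimpleGraph.ConnectedComponent.sound hvb).symm⟩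
      · exact ⟨Sum.inl (Quot.mk G.Reachable v), by rw [hF_inl, if_neg hvb]; rfl⟩
  rw [← Nat.card_eq_of_bijective F hbij, Nat.card_sum]
  simp


end GraphLemmas

section OG
variable (ends : E → V × V) (n : E → ℤ) (e : E)

lemma og_adj (p : E → Prop) (u v : V) :
    (og ends p).Adj u v ↔ u ≠ v ∧ ∃ e, p e ∧ (ends e = (u, v) ∨ ends e = (v, u)) := by
  simp only [og, SimpleGraph.fromRel_adj]
  constructor
  · rintro ⟨hne, (⟨e, hp, h1, h2⟩ | ⟨e, hp, h1, h2⟩)⟩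
    · exact ⟨hne, e, hp, Or.inl (Prod.ext h1 h2)⟩
    · exact ⟨hne, e, hp, Or.inr (Prod.ext h1 h2)⟩
  · rintro ⟨hne, e, hp, (h | h)⟩
    · exact ⟨hne, Or.inl ⟨e, hp, by rw [h], by rw [h]⟩⟩
    · exact ⟨hne, Or.inr ⟨e, hp, by rw [h], by rw [h]⟩⟩

lemma decE_self : decE n e e = n e - 1 := Function.update_self _ _ _

lemma decE_ne {e' : E} (h : e' ≠ e) : decE n e e' = n e' := Function.update_of_ne h _ _

lemma og_dec_le : og ends (fun e' => 0 < decE n e e') ≤ og ends (fun e' => 0 < n e') := by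
  intro u v h
  rw [og_adj] at h ⊢
  refine ⟨h.1, ?_⟩
  obtain ⟨_, ⟨e', he', hee⟩⟩ := h
  refine ⟨e', ?_, hee⟩
  by_cases hc : e' = e
  · subst hc; rw [decE_self] at he'; omega
  · rwa [decE_ne _ _ hc] at he'

lemma og_dec_adj_cases (u v : V) (h : (og ends (fun e' => 0 < n e')).Adj u v) :
    (og ends (fun e' => 0 < decE n e e')).Adj u v ∨
      (u = (ends e).1 ∧ v = (ends e).2) ∨ (u = (ends e).2 ∧ v = (ends e).1) := by
  rw [og_adj] at h
  obtain ⟨hne, e', he', hee⟩ := h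
  by_cases hc : e' = e
  · subst hc
    rcases hee with h1 | h1
    · exact Or.inr (Or.inl ⟨by rw [h1], by rw [h1]⟩)
    · exact Or.inr (Or.inr ⟨by rw [h1], by rw [h1]⟩)
  · exact Or.inl ((og_adj _ _ _ _).mpr ⟨hne, e', by rwa [decE_ne _ _ hc], hee⟩)

lemma og_adj_of_pos (hloop : (ends e).1 ≠ (ends e).2) (hne : 0 < n e) :
    (og ends (fun e' => 0 < n e')).Adj (ends e).1 (ends e).2 :=
  (og_adj _ _ _ _).mpr ⟨hloop, e, hne, Or.inl rfl⟩

end OG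

section Scenario
variable [Nonempty V]

lemma numC_pos [Finite V] (ends : E → V × V) (p : E → Prop) : 1 ≤ numC ends p := by
  haveI : Finite (og ends p).ConnectedComponent := Quot.finite _
  haveI : Nonempty (og ends p).ConnectedComponent :=
    ⟨(og ends p).connectedComponentMk (Classical.arbitrary V)⟩
  exact Nat.card_pos

lemma scenario [Finite V] (ends : E → V × V) (n : E → ℤ) (e : E) (x y x₀ : V)
    (hxy : ends e = (x, y) ∨ ends e = (y, x)) (hloop : (ends e).1 ≠ (ends e).2)
    (hne : 0 < n e)
    (hxr : (og ends (fun e' => 0 < n e')).Reachable x x₀) :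
    (numC ends (fun e' => 0 < decE n e e') = numC ends (fun e' => 0 < n e') ∧
      (og ends (fun e' => 0 < decE n e e')).Reachable x x₀ ∧
      (og ends (fun e' => 0 < decE n e e')).Reachable y x₀) ∨
    (numC ends (fun e' => 0 < decE n e e') = numC ends (fun e' => 0 < n e') + 1 ∧
      ¬ (og ends (fun e' => 0 < decE n e e')).Reachable x x₀ ∧
      (og ends (fun e' => 0 < decE n e e')).Reachable y x₀) ∨
    (numC ends (fun e' => 0 < decE n e e') = numC ends (fun e' => 0 < n e') + 1 ∧
      (og ends (fun e' => 0 < decE n e e')).Reachable x x₀ ∧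
      ¬ (og ends (fun e' => 0 < decE n e e')).Reachable y x₀) := by
  set G := og ends (fun e' => 0 < n e') with hG
  set G' := og ends (fun e' => 0 < decE n e e') with hG'
  have hnumC' : numC ends (fun e' => 0 < decE n e e') = Nat.card G'.ConnectedComponent := rfl
  have hnumC : numC ends (fun e' => 0 < n e') = Nat.card G.ConnectedComponent := rfl
  have hadj : ∀ u v, G.Adj u v → G'.Adj u v ∨ (u = x ∧ v = y) ∨ (u = y ∧ v = x) := by
    intro u v h
    rcases og_dec_adj_cases ends n e u v h with h' | ⟨h1, h2⟩ | ⟨h1, h2⟩ <;>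
      [exact Or.inl h'; skip; skip] <;>
      rcases hxy with hh | hh <;> rw [hh] at h1 h2 <;> simp at h1 h2 <;> subst h1 <;> subst h2 <;> tauto
  have hle : G' ≤ G := og_dec_le ends n e
  have hGadj : G.Adj x y := by
    rcases hxy with h | h
    · have := og_adj_of_pos ends n e hloop hne; rw [h] at this; exact this
    · have := og_adj_of_pos ends n e hloop hne; rw [h] at this; exact this.symm
  by_cases hab : G'.Reachable x y
  · have hiff := reach_iff_of_reach hle x y hadj hab
    left
    rw [hnumC', hnumC]
    exact ⟨(card_cc_eq_of_reach_iff hiff).symm, (hiff x x₀).mp hxr,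
      hab.symm.trans ((hiff x x₀).mp hxr)⟩
  · have hcard : Nat.card G'.ConnectedComponent = Nat.card G.ConnectedComponent + 1 :=
      card_cc_succ hle x y hadj hGadj.reachable hab
    rw [hnumC', hnumC]
    rcases reach_cases x y hadj hxr with h' | ⟨h1, h2⟩ | ⟨h1, h2⟩
    · right; right
      exact ⟨hcard, h', fun hy => hab (h'.trans hy.symm)⟩
    · right; left
      exact ⟨hcard, fun hx' => hab (hx'.trans h2.symm), h2⟩
    · exact absurd h1 hab

end Scenario

section Ratio
variable (ends : E → V × V) (W : E → ℝ) (Φ : V → ℝ)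

lemma prod_ratio (n : E → ℤ) (e : E) (hne : 0 < n e) :
    (∏ e' ∈ Finset.univ.filter (fun e' => 0 < decE n e e'),
        (2 * Jw ends W Φ e') ^ (decE n e e').toNat / (((decE n e e').toNat.factorial : ℝ))) *
      (2 * Jw ends W Φ e) =
    (∏ e' ∈ Finset.univ.filter (fun e' => 0 < n e'),
        (2 * Jw ends W Φ e') ^ (n e').toNat / (((n e').toNat.factorial : ℝ))) * (n e : ℝ) := by
  classical
  set g : E → ℝ := fun e' => (2 * Jw ends W Φ e') ^ (n e').toNat / (((n e').toNat.factorial : ℝ))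
    with hg
  set g' : E → ℝ := fun e' =>
    (2 * Jw ends W Φ e') ^ (decE n e e').toNat / (((decE n e e').toNat.factorial : ℝ)) with hg'
  have heF : e ∈ Finset.univ.filter (fun e' => 0 < n e') := by simp [hne]
  have herase : (Finset.univ.filter (fun e' => 0 < decE n e e')).erase e =
      (Finset.univ.filter (fun e' => 0 < n e')).erase e := by
    ext e'
    by_cases hc : e' = e
    · simp [hc]
    · simp [hc, decE_ne n e hc]
  have hsame : ∀ e' ∈ (Finset.univ.filter (fun e' => 0 < n e')).erase e, g' e' = g e' := by
    intro e' he'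
    have hc : e' ≠ e := (Finset.mem_erase.mp he').1
    simp [hg, hg', decE_ne n e hc]
  have hGprod : ∏ e' ∈ Finset.univ.filter (fun e' => 0 < n e'), g e' =
      g e * ∏ e' ∈ (Finset.univ.filter (fun e' => 0 < n e')).erase e, g e' :=
    (Finset.mul_prod_erase _ _ heF).symm
  by_cases h1 : 1 < n e
  · have heF' : e ∈ Finset.univ.filter (fun e' => 0 < decE n e e') := by
      simp [decE_self]; omega
    have hF'prod : ∏ e' ∈ Finset.univ.filter (fun e' => 0 < decE n e e'), g' e' =
        g' e * ∏ e' ∈ (Finset.univ.filter (fun e' => 0 < n e')).erase e, g e' := by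
      rw [← Finset.mul_prod_erase _ _ heF', herase]
      exact congrArg _ (Finset.prod_congr rfl hsame)
    rw [hF'prod, hGprod]
    have hkey : g' e * (2 * Jw ends W Φ e) = g e * (n e : ℝ) := by
      have hm : (n e).toNat = ((n e).toNat - 1) + 1 := by omega
      have hd : (decE n e e).toNat = (n e).toNat - 1 := by rw [decE_self]; omega
      have hfac : ((n e).toNat.factorial : ℝ) =
          ((n e).toNat : ℝ) * (((n e).toNat - 1).factorial : ℝ) := by
        conv_lhs => rw [hm]
        rw [Nat.factorial_succ, Nat.cast_mul, ← hm]
      have hm0 : ((n e).toNat : ℝ) ≠ 0 := Nat.cast_ne_zero.mpr (by omega)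
      have hfacne : (((n e).toNat - 1).factorial : ℝ) ≠ 0 :=
        Nat.cast_ne_zero.mpr (Nat.factorial_ne_zero _)
      have hfacne2 : (((n e).toNat).factorial : ℝ) ≠ 0 :=
        Nat.cast_ne_zero.mpr (Nat.factorial_ne_zero _)
      have hcast : ((n e : ℝ)) = ((n e).toNat : ℝ) := by
        exact_mod_cast (Int.toNat_of_nonneg hne.le).symm
      simp only [hg, hg', hd]
      rw [hcast, hfac]
      have hpow : (2 * Jw ends W Φ e) ^ ((n e).toNat - 1) * (2 * Jw ends W Φ e) =
          (2 * Jw ends W Φ e) ^ (n e).toNat := by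
        conv_rhs => rw [hm]
        rw [pow_succ]
      field_simp [hfacne, hm0]
      rw [← hpow]
      ring
    rw [mul_comm (g' e) _, mul_assoc, hkey]
    ring
  · have hne1 : n e = 1 := by omega
    have heF' : e ∉ Finset.univ.filter (fun e' => 0 < decE n e e') := by
      simp [decE_self, hne1]
    have hFeq : Finset.univ.filter (fun e' => 0 < decE n e e') =
        (Finset.univ.filter (fun e' => 0 < n e')).erase e := by
      rw [← herase, Finset.erase_eq_self.mpr heF']
    have hF'prod : ∏ e' ∈ Finset.univ.filter (fun e' => 0 < decE n e e'), g' e' =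
        ∏ e' ∈ (Finset.univ.filter (fun e' => 0 < n e')).erase e, g e' := by
      rw [hFeq]
      exact Finset.prod_congr rfl hsame
    rw [hF'prod, hGprod]
    have : g e = 2 * Jw ends W Φ e := by
      simp [hg, hne1]
    rw [this, hne1]
    push_cast
    ring

end Ratio

section PerEdge
variable (ends : E → V × V) (W : E → ℝ) (Φ : V → ℝ) (x₀ x : V) (n : E → ℤ) (e : E)

lemma ends_or (he : e ∈ inc ends x) :
    ends e = (x, oth ends e x) ∨ ends e = (oth ends e x, x) := by
  rw [inc, Finset.mem_filter] at he
  rcases he.2 with h | h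
  · left; rw [oth, if_pos h, ← h]
  · by_cases h1 : (ends e).1 = x
    · left; rw [oth, if_pos h1, ← h1]
    · right; rw [oth, if_neg h1, ← h]

lemma oth_ne (hloop : (ends e).1 ≠ (ends e).2) (he : e ∈ inc ends x) :
    oth ends e x ≠ x := by
  rcases ends_or ends x e he with h | h <;> rw [h] at hloop <;> simp at hloop
  · exact fun hc => hloop hc.symm
  · exact hloop

lemma Jw_eq (he : e ∈ inc ends x) :
    Jw ends W Φ e = W e * (Φ x * Φ (oth ends e x)) := by
  rcases ends_or ends x e he with h | h <;> rw [Jw, h] <;> ring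

lemma dec_nonneg (hn : ∀ e', 0 ≤ n e') (hne : 0 < n e) : ∀ e', 0 ≤ decE n e e' := by
  intro e'
  by_cases hc : e' = e
  · subst hc; rw [decE_self]; omega
  · rw [decE_ne n e hc]; exact hn e'

lemma dec_neg (hne : ¬ 0 < n e) (hn : ∀ e', 0 ≤ n e') : ¬ ∀ e', 0 ≤ decE n e e' := by
  intro h
  have := h e
  rw [decE_self] at this
  have := hn e
  omega

lemma theta_zero_of_neg (z : V) (hne : ¬ 0 < n e) (hn : ∀ e', 0 ≤ n e') :
    ThetaZ ends W x₀ z Φ (decE n e) = 0 := by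
  simp only [ThetaZ]
  rw [if_neg (dec_neg n e hne hn), mul_zero]

end PerEdge

section Main
variable [Nonempty V] (ends : E → V × V) (W : E → ℝ) (Φ : V → ℝ) (x₀ x : V) (n : E → ℤ) (e : E)

lemma theta_dec_x (hW : ∀ e', 0 < W e') (hΦ : ∀ z, 0 < Φ z)
    (hloop : ∀ e', (ends e').1 ≠ (ends e').2) (he : e ∈ inc ends x)
    (hn : ∀ e', 0 ≤ n e')
    (hxr : (og ends (fun e' => 0 < n e')).Reachable x x₀) :
    W e * (Φ (oth ends e x) / Φ x) * ThetaZ ends W x₀ x Φ (decE n e) =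
    ThetaZ ends W x₀ x Φ n * ((n e : ℝ) / Φ x ^ 2) *
      ((1 / 2) * (if A1 ends n e then (1 : ℝ) else 0) +
        (if A3 ends x₀ x n e then (1 : ℝ) else 0)) := by
  classical
  by_cases hne : 0 < n e
  case neg =>
    rw [theta_zero_of_neg ends W Φ x₀ n e x hne hn]
    have : (n e : ℝ) = 0 := by
      have h0 := hn e; interval_cases h : n e <;> simp_all
    rw [this]
    ring
  case pos =>
  have hP := prod_ratio ends W Φ n e hne
  have hJ := Jw_eq ends W Φ x e he
  have hyx := oth_ne ends x e (hloop e) he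
  simp only [ThetaZ]
  rw [if_pos hn, if_pos (dec_nonneg n e hn hne), if_pos hxr]
  set y := oth ends e x with hy
  set Eex := Real.exp (-(1 / 2) * ∑ z, Wtot ends W z * Φ z ^ 2 - ∑ e', Jw ends W Φ e') with hE
  set P := ∏ e' ∈ Finset.univ.filter (fun e' => 0 < n e'),
      (2 * Jw ends W Φ e') ^ (n e').toNat / (((n e').toNat.factorial : ℝ)) with hPdef
  set P' := ∏ e' ∈ Finset.univ.filter (fun e' => 0 < decE n e e'),
      (2 * Jw ends W Φ e') ^ (decE n e e').toNat / (((decE n e e').toNat.factorial : ℝ)) with hP'def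
  set px := ∏ z ∈ Finset.univ.erase x, Φ z with hpx
  set Tp := (2:ℝ) ^ (numC ends (fun e' => 0 < n e') - 1) with hT
  have hx1 : Φ x * (Φ x)⁻¹ = 1 := mul_inv_cancel₀ ((hΦ x).ne')
  have hpx0 : px ≠ 0 := by
    rw [hpx]
    exact Finset.prod_ne_zero_iff.mpr (fun z _ => (hΦ z).ne')
  have hΦx : Φ x ≠ 0 := (hΦ x).ne'
  have hΦy : Φ y ≠ 0 := (hΦ y).ne'
  have hWe : W e ≠ 0 := (hW e).ne'
  rcases scenario ends n e x y x₀ (ends_or ends x e he) (hloop e) hne hxr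
    with ⟨hc, hx', hy'⟩ | ⟨hc, hx', hy'⟩ | ⟨hc, hx', hy'⟩
  · rw [if_pos hx', hc, if_pos (show A1 ends n e from hc),
      if_neg (show ¬ A3 ends x₀ x n e from fun h => by have := h.1; omega)]
    have hP2 : P' * (2 * (W e * (Φ x * Φ y))) = P * (n e : ℝ) := by rw [← hJ]; exact hP
    linear_combination (Eex * Tp * px⁻¹ / (2 * Φ x ^ 2)) * hP2 -
      (W e * Φ y * Eex * P' * Tp * px⁻¹ * (Φ x)⁻¹) * hx1
  · rw [if_neg hx', if_neg (show ¬ A1 ends n e from fun h => by rw [A1] at h; omega),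
      if_neg (show ¬ A3 ends x₀ x n e from fun h => hx' h.2)]
    ring
  · rw [if_pos hx', hc, if_neg (show ¬ A1 ends n e from fun h => by rw [A1] at h; omega),
      if_pos (show A3 ends x₀ x n e from ⟨hc, hx'⟩)]
    have hpow : (2:ℝ) ^ (numC ends (fun e' => 0 < n e') + 1 - 1) = 2 * Tp := by
      rw [hT]
      have h1 := numC_pos ends (fun e' => 0 < n e')
      rw [Nat.add_sub_cancel]
      conv_lhs => rw [show numC ends (fun e' => 0 < n e') =
        (numC ends (fun e' => 0 < n e') - 1) + 1 by omega]
      rw [pow_succ]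
      ring
    rw [hpow]
    have hP2 : P' * (2 * (W e * (Φ x * Φ y))) = P * (n e : ℝ) := by rw [← hJ]; exact hP
    linear_combination (Eex * Tp * px⁻¹ / (Φ x ^ 2)) * hP2 -
      (2 * W e * Φ y * Eex * P' * Tp * px⁻¹ * (Φ x)⁻¹) * hx1

lemma theta_dec_y (hW : ∀ e', 0 < W e') (hΦ : ∀ z, 0 < Φ z)
    (hloop : ∀ e', (ends e').1 ≠ (ends e').2) (he : e ∈ inc ends x)
    (hn : ∀ e', 0 ≤ n e')
    (hxr : (og ends (fun e' => 0 < n e')).Reachable x x₀) :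
    W e * ThetaZ ends W x₀ (oth ends e x) Φ (decE n e) =
    ThetaZ ends W x₀ x Φ n * ((n e : ℝ) / Φ x ^ 2) *
      ((1 / 2) * (if A1 ends n e then (1 : ℝ) else 0) +
        (if A2 ends x₀ x n e then (1 : ℝ) else 0)) := by
  classical
  by_cases hne : 0 < n e
  case neg =>
    rw [theta_zero_of_neg ends W Φ x₀ n e _ hne hn]
    have : (n e : ℝ) = 0 := by
      have h0 := hn e; interval_cases h : n e <;> simp_all
    rw [this]
    ring
  case pos =>
  have hP := prod_ratio ends W Φ n e hne
  have hJ := Jw_eq ends W Φ x e he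
  have hyx := oth_ne ends x e (hloop e) he
  simp only [ThetaZ]
  rw [if_pos hn, if_pos (dec_nonneg n e hn hne), if_pos hxr]
  set y := oth ends e x with hy
  set Eex := Real.exp (-(1 / 2) * ∑ z, Wtot ends W z * Φ z ^ 2 - ∑ e', Jw ends W Φ e') with hE
  set P := ∏ e' ∈ Finset.univ.filter (fun e' => 0 < n e'),
      (2 * Jw ends W Φ e') ^ (n e').toNat / (((n e').toNat.factorial : ℝ)) with hPdef
  set P' := ∏ e' ∈ Finset.univ.filter (fun e' => 0 < decE n e e'),
      (2 * Jw ends W Φ e') ^ (decE n e e').toNat / (((decE n e e').toNat.factorial : ℝ)) with hP'def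
  set px := ∏ z ∈ Finset.univ.erase x, Φ z with hpx
  set py := ∏ z ∈ Finset.univ.erase y, Φ z with hpy
  set Tp := (2:ℝ) ^ (numC ends (fun e' => 0 < n e') - 1) with hT
  have hpx0 : px ≠ 0 := by
    rw [hpx]
    exact Finset.prod_ne_zero_iff.mpr (fun z _ => (hΦ z).ne')
  have hpy0 : py ≠ 0 := by
    rw [hpy]
    exact Finset.prod_ne_zero_iff.mpr (fun z _ => (hΦ z).ne')
  have hΦx : Φ x ≠ 0 := (hΦ x).ne'
  have hΦy : Φ y ≠ 0 := (hΦ y).ne'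
  have hWe : W e ≠ 0 := (hW e).ne'
  have hQ : Φ x * px = Φ y * py := by
    rw [hpx, hpy, Finset.mul_prod_erase _ _ (Finset.mem_univ x),
      Finset.mul_prod_erase _ _ (Finset.mem_univ y)]
  have hpyinv : py⁻¹ = Φ y * ((Φ x)⁻¹ * px⁻¹) := by
    field_simp
    linear_combination hQ
  have hP2 : P' * (2 * (W e * (Φ x * Φ y))) = P * (n e : ℝ) := by rw [← hJ]; exact hP
  have hx1 : Φ x * (Φ x)⁻¹ = 1 := mul_inv_cancel₀ hΦx
  have hy1 : Φ y * (Φ y)⁻¹ = 1 := mul_inv_cancel₀ hΦy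
  rcases scenario ends n e x y x₀ (ends_or ends x e he) (hloop e) hne hxr
    with ⟨hc, hx', hy'⟩ | ⟨hc, hx', hy'⟩ | ⟨hc, hx', hy'⟩
  · rw [if_pos hy', hc, if_pos (show A1 ends n e from hc),
      if_neg (show ¬ A2 ends x₀ x n e from fun h => by have := h.1; omega), hpyinv]
    linear_combination (Eex * Tp * px⁻¹ / (2 * Φ x ^ 2)) * hP2 -
      (W e * Φ y * Eex * P' * Tp * px⁻¹ * (Φ x)⁻¹) * hx1
  · rw [if_pos hy', hc, if_neg (show ¬ A1 ends n e from fun h => by rw [A1] at h; omega),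
      if_pos (show A2 ends x₀ x n e from ⟨hc, hy'⟩), hpyinv]
    have hpow : (2:ℝ) ^ (numC ends (fun e' => 0 < n e') + 1 - 1) = 2 * Tp := by
      rw [hT]
      have h1 := numC_pos ends (fun e' => 0 < n e')
      rw [Nat.add_sub_cancel]
      conv_lhs => rw [show numC ends (fun e' => 0 < n e') =
        (numC ends (fun e' => 0 < n e') - 1) + 1 by omega]
      rw [pow_succ]
      ring
    rw [hpow]
    linear_combination (Eex * Tp * px⁻¹ / (Φ x ^ 2)) * hP2 -
      (2 * W e * Φ y * Eex * P' * Tp * px⁻¹ * (Φ x)⁻¹) * hx1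
  · rw [if_neg hy', if_neg (show ¬ A1 ends n e from fun h => by rw [A1] at h; omega),
      if_neg (show ¬ A2 ends x₀ x n e from fun h => hy' h.2)]
    ring

lemma ind_sum (hΦ : ∀ z, 0 < Φ z)
    (hloop : ∀ e', (ends e').1 ≠ (ends e').2) (he : e ∈ inc ends x)
    (hne : 0 < n e)
    (hxr : (og ends (fun e' => 0 < n e')).Reachable x x₀) :
    (if A1 ends n e then (1 : ℝ) else 0) + (if A2 ends x₀ x n e then (1 : ℝ) else 0) +
      (if A3 ends x₀ x n e then (1 : ℝ) else 0) = 1 := by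
  classical
  rcases scenario ends n e x (oth ends e x) x₀ (ends_or ends x e he) (hloop e) hne hxr
    with ⟨hc, hx', hy'⟩ | ⟨hc, hx', hy'⟩ | ⟨hc, hx', hy'⟩
  · rw [if_pos (show A1 ends n e from hc),
      if_neg (show ¬ A2 ends x₀ x n e from fun h => by have := h.1; omega),
      if_neg (show ¬ A3 ends x₀ x n e from fun h => by have := h.1; omega)]
    ring
  · rw [if_neg (show ¬ A1 ends n e from fun h => by rw [A1] at h; omega),
      if_pos (show A2 ends x₀ x n e from ⟨hc, hy'⟩),
      if_neg (show ¬ A3 ends x₀ x n e from fun h => hx' h.2)]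
    ring
  · rw [if_neg (show ¬ A1 ends n e from fun h => by rw [A1] at h; omega),
      if_neg (show ¬ A2 ends x₀ x n e from fun h => hy' h.2),
      if_pos (show A3 ends x₀ x n e from ⟨hc, hx'⟩)]
    ring

lemma exists_C0 (hloop : ∀ e', (ends e').1 ≠ (ends e').2) :
    ∃ C0 : ℝ, ∀ t : ℝ, ThetaZ ends W x₀ x (Function.update Φ x t) n =
      C0 * (Real.exp (-(1 / 2) * (Wtot ends W x * t ^ 2) -
          (∑ e' ∈ inc ends x, W e' * Φ (oth ends e' x)) * t) *
        t ^ (∑ e' ∈ (inc ends x).filter (fun e' => 0 < n e'), (n e').toNat)) := by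
  classical
  set p : E → Prop := fun e' => (ends e').1 = x ∨ (ends e').2 = x with hp
  refine ⟨Real.exp (-(1 / 2) * ∑ z ∈ Finset.univ.erase x, Wtot ends W z * Φ z ^ 2 -
      ∑ e' ∈ Finset.univ.filter (fun e' => ¬ p e'), Jw ends W Φ e') *
    (∏ e' ∈ Finset.univ.filter (fun e' => 0 < n e'),
      (if p e' then (2 * (W e' * Φ (oth ends e' x))) ^ (n e').toNat
        else (2 * Jw ends W Φ e') ^ (n e').toNat) / (((n e').toNat.factorial : ℝ))) *
    2 ^ (numC ends (fun e' => 0 < n e') - 1) *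
    (∏ z ∈ Finset.univ.erase x, Φ z)⁻¹ *
    (if (og ends (fun e' => 0 < n e')).Reachable x x₀ then 1 else 0) *
    (if ∀ e', 0 ≤ n e' then 1 else 0), ?_⟩
  intro t
  have hupdx : Function.update Φ x t x = t := Function.update_self x t Φ
  have hupd : ∀ z, z ≠ x → Function.update Φ x t z = Φ z := fun z hz =>
    Function.update_of_ne hz t Φ
  have hoth : ∀ e', p e' → oth ends e' x ≠ x := by
    intro e' hpe
    have : e' ∈ inc ends x := by rw [inc, Finset.mem_filter]; exact ⟨Finset.mem_univ _, hpe⟩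
    exact oth_ne ends x e' (hloop e') this
  have hincp : inc ends x = Finset.univ.filter p := rfl
  -- exp part
  have hsum1 : ∑ z, Wtot ends W z * Function.update Φ x t z ^ 2 =
      Wtot ends W x * t ^ 2 + ∑ z ∈ Finset.univ.erase x, Wtot ends W z * Φ z ^ 2 := by
    rw [← Finset.add_sum_erase _ _ (Finset.mem_univ x), hupdx]
    congr 1
    exact Finset.sum_congr rfl (fun z hz => by
      rw [hupd z (Finset.mem_erase.mp hz).1])
  have hJup : ∀ e', p e' → Jw ends W (Function.update Φ x t) e' =
      W e' * Φ (oth ends e' x) * t := by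
    intro e' hpe
    rcases hpe with h | h
    · have h2 : (ends e').2 ≠ x := fun hc => hloop e' (h.trans hc.symm)
      rw [Jw, h, hupdx, hupd _ h2, oth, if_pos h]
      try ring
    · have h1 : (ends e').1 = x → False := fun hc => hloop e' (hc.trans h.symm)
      by_cases hc : (ends e').1 = x
      · exact absurd hc h1
      · rw [Jw, h, hupdx, hupd _ hc, oth, if_neg hc]
        try ring
  have hJsame : ∀ e', ¬ p e' → Jw ends W (Function.update Φ x t) e' = Jw ends W Φ e' := by
    intro e' hpe
    have h1 : (ends e').1 ≠ x := fun hc => hpe (Or.inl hc)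
    have h2 : (ends e').2 ≠ x := fun hc => hpe (Or.inr hc)
    rw [Jw, Jw, hupd _ h1, hupd _ h2]
  have hsum2 : ∑ e', Jw ends W (Function.update Φ x t) e' =
      (∑ e' ∈ inc ends x, W e' * Φ (oth ends e' x)) * t +
      ∑ e' ∈ Finset.univ.filter (fun e' => ¬ p e'), Jw ends W Φ e' := by
    rw [← Finset.sum_filter_add_sum_filter_not Finset.univ p, hincp, Finset.sum_mul]
    congr 1
    · exact Finset.sum_congr rfl (fun e' he' => hJup e' (Finset.mem_filter.mp he').2)
    · exact Finset.sum_congr rfl (fun e' he' => hJsame e' (Finset.mem_filter.mp he').2)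
  -- product part
  have hprod : (∏ e' ∈ Finset.univ.filter (fun e' => 0 < n e'),
      (2 * Jw ends W (Function.update Φ x t) e') ^ (n e').toNat /
        (((n e').toNat.factorial : ℝ))) =
      (∏ e' ∈ Finset.univ.filter (fun e' => 0 < n e'),
        (if p e' then (2 * (W e' * Φ (oth ends e' x))) ^ (n e').toNat
          else (2 * Jw ends W Φ e') ^ (n e').toNat) / (((n e').toNat.factorial : ℝ))) *
      t ^ (∑ e' ∈ (inc ends x).filter (fun e' => 0 < n e'), (n e').toNat) := by
    have hNset : (inc ends x).filter (fun e' => 0 < n e') =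
        (Finset.univ.filter (fun e' => 0 < n e')).filter p := by
      rw [hincp, Finset.filter_filter, Finset.filter_filter]
      exact Finset.filter_congr (fun e' _ => by tauto)
    rw [hNset, ← Finset.prod_pow_eq_pow_sum,
      show (∏ e' ∈ (Finset.univ.filter (fun e' => 0 < n e')).filter p, t ^ (n e').toNat) =
        ∏ e' ∈ Finset.univ.filter (fun e' => 0 < n e'), (if p e' then t ^ (n e').toNat else 1)
        from Finset.prod_filter _ _,
      ← Finset.prod_mul_distrib]
    exact Finset.prod_congr rfl (fun e' he' => by
      by_cases hpe : p e'
      · rw [if_pos hpe, if_pos hpe, hJup e' hpe,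
          show 2 * (W e' * Φ (oth ends e' x) * t) = 2 * (W e' * Φ (oth ends e' x)) * t by ring,
          mul_pow]
        ring
      · rw [if_neg hpe, if_neg hpe, hJsame e' hpe]
        ring)
  -- erase product
  have hpe : ∏ z ∈ Finset.univ.erase x, Function.update Φ x t z =
      ∏ z ∈ Finset.univ.erase x, Φ z :=
    Finset.prod_congr rfl (fun z hz => hupd z (Finset.mem_erase.mp hz).1)
  simp only [ThetaZ]
  rw [hsum1, hsum2, hprod, hpe]
  rw [show -(1 / 2) * (Wtot ends W x * t ^ 2 + ∑ z ∈ Finset.univ.erase x, Wtot ends W z * Φ z ^ 2) -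
      ((∑ e' ∈ inc ends x, W e' * Φ (oth ends e' x)) * t +
        ∑ e' ∈ Finset.univ.filter (fun e' => ¬ p e'), Jw ends W Φ e') =
      (-(1 / 2) * (Wtot ends W x * t ^ 2) -
        (∑ e' ∈ inc ends x, W e' * Φ (oth ends e' x)) * t) +
      (-(1 / 2) * ∑ z ∈ Finset.univ.erase x, Wtot ends W z * Φ z ^ 2 -
        ∑ e' ∈ Finset.univ.filter (fun e' => ¬ p e'), Jw ends W Φ e') by ring,
    Real.exp_add]
  ring

lemma deriv_part (f : V → (V → ℝ) → (E → ℤ) → ℝ)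
    (hf : DifferentiableAt ℝ (fun t => f x (Function.update Φ x t) n) (Φ x))
    (hΦ : ∀ z, 0 < Φ z) (hloop : ∀ e', (ends e').1 ≠ (ends e').2)
    (hn : ∀ e', 0 ≤ n e') :
    -(1 / Φ x) * deriv (fun t => ThetaZ ends W x₀ x (Function.update Φ x t) n *
        f x (Function.update Φ x t) n) (Φ x) =
    ThetaZ ends W x₀ x Φ n * (-(1 / Φ x) * deriv (fun t => f x (Function.update Φ x t) n) (Φ x)) +
    ∑ e' ∈ inc ends x, ((W e' + W e' * (Φ (oth ends e' x) / Φ x) - (n e' : ℝ) / Φ x ^ 2) *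
      (ThetaZ ends W x₀ x Φ n * f x Φ n)) := by
  classical
  obtain ⟨C0, hC0⟩ := exists_C0 ends W Φ x₀ x n hloop
  set S := ∑ e' ∈ inc ends x, W e' * Φ (oth ends e' x) with hS
  set N := ∑ e' ∈ (inc ends x).filter (fun e' => 0 < n e'), (n e').toNat with hN
  have hΦx : Φ x ≠ 0 := (hΦ x).ne'
  have hpoly : HasDerivAt (fun t : ℝ => -(1 / 2) * (Wtot ends W x * t ^ 2) - S * t)
      (-(1 / 2) * (Wtot ends W x * (2 * Φ x)) - S) (Φ x) := by
    have h1 := (((hasDerivAt_pow 2 (Φ x)).const_mul (Wtot ends W x)).const_mul (-(1 / 2) : ℝ))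
    have h2 := (hasDerivAt_id (Φ x)).const_mul S
    have := h1.sub h2
    simp only [pow_one, id] at this ⊢
    exact this.congr_deriv (by norm_num)
  have hexp := hpoly.exp
  have hpow0 := hasDerivAt_pow N (Φ x)
  have hNp0 : (N : ℝ) * Φ x ^ (N - 1) = (N : ℝ) / Φ x * Φ x ^ N := by
    rcases Nat.eq_zero_or_pos N with h0 | h0
    · simp [h0]
    · rw [pow_sub₀ _ hΦx h0, pow_one]
      ring
  have hpow : HasDerivAt (fun t : ℝ => t ^ N) ((N : ℝ) / Φ x * Φ x ^ N) (Φ x) := by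
    rw [← hNp0]; exact hpow0
  have hmul := (hexp.mul hpow).const_mul C0
  have hfd := hf.hasDerivAt
  have hprod := hmul.mul hfd
  have hfun : (fun t => ThetaZ ends W x₀ x (Function.update Φ x t) n *
      f x (Function.update Φ x t) n) =
      (fun t => C0 * (Real.exp (-(1 / 2) * (Wtot ends W x * t ^ 2) - S * t) * t ^ N) *
        f x (Function.update Φ x t) n) := funext (fun t => by rw [hC0 t])
  have hderiv : deriv (fun t => C0 * (Real.exp (-(1 / 2) * (Wtot ends W x * t ^ 2) - S * t) * t ^ N) *
        f x (Function.update Φ x t) n) (Φ x) = _ := hprod.deriv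
  simp only [Pi.mul_apply] at hderiv
  rw [hfun, hderiv]
  have hval : ThetaZ ends W x₀ x Φ n =
      C0 * (Real.exp (-(1 / 2) * (Wtot ends W x * Φ x ^ 2) - S * Φ x) * Φ x ^ N) := by
    have := hC0 (Φ x)
    rwa [Function.update_eq_self] at this
  have hupd : f x (Function.update Φ x (Φ x)) n = f x Φ n := by
    rw [Function.update_eq_self]
  have hNsum : (N : ℝ) = ∑ e' ∈ inc ends x, (n e' : ℝ) := by
    rw [hN]
    push_cast
    rw [Finset.sum_filter]
    refine Finset.sum_congr rfl (fun e' _ => ?_)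
    by_cases hc : 0 < n e'
    · rw [if_pos hc]
      have := Int.toNat_of_nonneg hc.le
      exact_mod_cast this
    · rw [if_neg hc]
      have := hn e'
      have : n e' = 0 := by omega
      rw [this]
      simp
  have hsum : ∑ e' ∈ inc ends x, ((W e' + W e' * (Φ (oth ends e' x) / Φ x) -
      (n e' : ℝ) / Φ x ^ 2) * (ThetaZ ends W x₀ x Φ n * f x Φ n)) =
      (Wtot ends W x + S / Φ x - (N : ℝ) / Φ x ^ 2) *
        (ThetaZ ends W x₀ x Φ n * f x Φ n) := by
    rw [hNsum, Wtot, hS, Finset.sum_div, Finset.sum_div, ← Finset.sum_add_distrib,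
      ← Finset.sum_sub_distrib, Finset.sum_mul]
    exact Finset.sum_congr rfl (fun e' _ => by ring)
  rw [hsum, hupd, hval]
  set Eg := Real.exp (-(1 / 2) * (Wtot ends W x * Φ x ^ 2) - S * Φ x) with hEg
  set df := deriv (fun t => f x (Function.update Φ x t) n) (Φ x) with hdf
  set fx := f x Φ n with hfx
  field_simp
  ring

end Main

/-- the intertwining relation `L̃(Θ f) = Θ · Ľ f`. -/
theorem stmt11 [Nonempty V] (ends : E → V × V)
    (hloop : ∀ e, (ends e).1 ≠ (ends e).2)
    (hconn : (og ends (fun _ => True)).Connected)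
    (W : E → ℝ) (hW : ∀ e, 0 < W e) (x₀ : V)
    (f : V → (V → ℝ) → (E → ℤ) → ℝ)
    (hf : ∀ (y z : V) (Φ : V → ℝ) (n : E → ℤ),
      DifferentiableAt ℝ (fun t => f y (Function.update Φ z t) n) (Φ z))
    (x : V) (Φ : V → ℝ) (hΦ : ∀ z, 0 < Φ z)
    (n : E → ℤ) (hn : ∀ e, 0 ≤ n e)
    (hx : (og ends (fun e => 0 < n e)).Reachable x x₀) :
    Lt ends W (fun y Ψ m => ThetaZ ends W x₀ y Ψ m * f y Ψ m) x Φ n =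
      ThetaZ ends W x₀ x Φ n * Lc ends W x₀ f x Φ n := by

  classical
  rw [Lt, Lc]
  beta_reduce
  rw [deriv_part ends W Φ x₀ x n f (hf x x Φ n) hΦ hloop hn, mul_add, Finset.mul_sum, add_assoc]
  congr 1
  rw [← Finset.sum_add_distrib]
  refine Finset.sum_congr rfl (fun e he => ?_)
  have Hy := theta_dec_y ends W Φ x₀ x n e hW hΦ hloop he hn hx
  have Hx := theta_dec_x ends W Φ x₀ x n e hW hΦ hloop he hn hx
  have hind : ThetaZ ends W x₀ x Φ n * ((n e : ℝ) / Φ x ^ 2) *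
      ((if A1 ends n e then (1 : ℝ) else 0) + (if A2 ends x₀ x n e then (1 : ℝ) else 0) +
        (if A3 ends x₀ x n e then (1 : ℝ) else 0)) =
      ThetaZ ends W x₀ x Φ n * ((n e : ℝ) / Φ x ^ 2) := by
    by_cases hne : 0 < n e
    · rw [ind_sum ends Φ x₀ x n e hΦ hloop he hne hx, mul_one]
    · have h0 : (n e : ℝ) = 0 := by
        have := hn e
        have : n e = 0 := by omega
        rw [this]; simp
      rw [h0]
      ring
  linear_combination (f (oth ends e x) Φ (decE n e)) * Hy +
    (f x Φ (decE n e)) * Hx + (f x Φ n) * hind
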